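/- arXiv:1404.3221 — 3 statements merged into one kernel-verified Lean document; each statement's English description precedes it below -/
import Mathlib

section
/- Let V > 0, k > 0, and 0 < r_a < r_star. If V / r_star = k * V * |cos(π - arcsin(r_a / r_star))|, then r_star = sqrt(r_a^2 + 1/k^2). -/
open Real

theorem abs_cos_pi_sub_arcsin (x : ℝ) : |cos (π - arcsin x)| = √(1 - x ^ 2) := by
  rw [cos_pi_sub, abs_neg, cos_arcsin, abs_of_nonneg (sqrt_nonneg _)]

/-- The square root is positive (otherwise `r⁻¹ = 0`), so squaring loses nothing; `k > 0` fixes the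
sign of `r`. -/
theorem eq_sqrt_of_inv_eq_mul_sqrt {r a k : ℝ} (hk : 0 < k)
    (h : r⁻¹ = k * √(1 - (a / r) ^ 2)) : r = √(a ^ 2 + 1 / k ^ 2) := by
  have hr : r ≠ 0 := by
    rintro rfl
    exact hk.ne (by simpa using h)
  have hr_pos : 0 < r := by
    have : 0 ≤ r⁻¹ := h ▸ mul_nonneg hk.le (sqrt_nonneg _)
    exact lt_of_le_of_ne (inv_nonneg.mp this) (Ne.symm hr)
  have hsqrt_pos : 0 < √(1 - (a / r) ^ 2) :=
    pos_of_mul_pos_right (h ▸ inv_pos.mpr hr_pos) hk.le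
  have hsq : r⁻¹ ^ 2 = k ^ 2 * (1 - (a / r) ^ 2) := by
    rw [h, mul_pow, sq_sqrt (sqrt_pos.mp hsqrt_pos).le]
  have hr_sq : r ^ 2 = a ^ 2 + 1 / k ^ 2 := by
    field_simp at hsq ⊢
    linarith
  rw [← hr_sq, sqrt_sq hr_pos.le]

theorem stmt_0_general (V k r_a r_star : ℝ) (hV : 0 < V) (hk : 0 < k)
    (h : V / r_star = k * V * |Real.cos (Real.pi - Real.arcsin (r_a / r_star))|) :
    r_star = Real.sqrt (r_a ^ 2 + 1 / k ^ 2) := by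
  rw [abs_cos_pi_sub_arcsin, div_eq_mul_inv, mul_comm, mul_right_comm] at h
  exact eq_sqrt_of_inv_eq_mul_sqrt hk (mul_right_cancel₀ hV.ne' h)

theorem stmt_0 (V k r_a r_star : ℝ) (hV : 0 < V) (hk : 0 < k)
    (hra : 0 < r_a) (hlt : r_a < r_star)
    (h : V / r_star = k * V * |Real.cos (Real.pi - Real.arcsin (r_a / r_star))|) :
    r_star = Real.sqrt (r_a ^ 2 + 1 / k ^ 2) :=
  stmt_0_general V k r_a r_star hV hk h
end

section
/- Let V > 0, k > 0, r ≥ r_a > 0 with k*sqrt(1 - r_a^2/r^2) ≥ 1/r (equivalently k*cos(arcsin(r_a/r)) ≥ 1/r). For θ ∈ [0, π], define D(r,θ) = V*cos(θ)*(-k*cos(θ) - sin(θ)/r + 1/r). If additionally k ≥ 1/r, then D(r,θ) ≤ 0. -/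
open Real Set

lemma one_le_cos_add_sin {θ : ℝ} (hc : 0 ≤ cos θ) (hs : 0 ≤ sin θ) : 1 ≤ cos θ + sin θ := by
  -- on `[0, 1]`, `x² ≤ x`
  nlinarith [sin_sq_add_cos_sq θ, cos_le_one θ, sin_le_one θ]

lemma neg_mul_cos_sub_sin_div_add_one_div_nonneg {k r θ : ℝ} (hk : 0 ≤ k) (hr : 0 ≤ r)
    (hc : cos θ ≤ 0) : 0 ≤ -k * cos θ - sin θ / r + 1 / r := by
  have hsin : sin θ / r ≤ 1 / r := by gcongr; exact sin_le_one θ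
  nlinarith

lemma neg_mul_cos_sub_sin_div_add_one_div_nonpos {k r θ : ℝ} (hr : 0 < r) (hkr : 1 / r ≤ k)
    (hc : 0 ≤ cos θ) (hs : 0 ≤ sin θ) : -k * cos θ - sin θ / r + 1 / r ≤ 0 :=
  calc -k * cos θ - sin θ / r + 1 / r
      ≤ -(1 / r) * cos θ - sin θ / r + 1 / r := by gcongr
    _ = (1 - (cos θ + sin θ)) / r := by ring
    _ ≤ 0 := div_nonpos_of_nonpos_of_nonneg (by linarith [one_le_cos_add_sin hc hs]) hr.le

lemma cos_mul_neg_mul_cos_sub_sin_div_add_one_div_nonpos {k r θ : ℝ} (hr : 0 < r)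
    (hkr : 1 / r ≤ k) (hθ : θ ∈ Icc 0 π) : cos θ * (-k * cos θ - sin θ / r + 1 / r) ≤ 0 := by
  rcases le_total (cos θ) 0 with hc | hc
  · have hk : 0 ≤ k := (one_div_pos.2 hr).le.trans hkr
    exact mul_nonpos_of_nonpos_of_nonneg hc
      (neg_mul_cos_sub_sin_div_add_one_div_nonneg hk hr.le hc)
  · exact mul_nonpos_of_nonneg_of_nonpos hc
      (neg_mul_cos_sub_sin_div_add_one_div_nonpos hr hkr hc (sin_nonneg_of_mem_Icc hθ))

theorem stmt_5_general (V k r_a r θ : ℝ) (hV : 0 < V)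
    (hra : 0 < r_a) (hr : r_a ≤ r)
    (hθ : θ ∈ Set.Icc 0 Real.pi) (hkr : 1 / r ≤ k) :
    V * Real.cos θ * (-k * Real.cos θ - Real.sin θ / r + 1 / r) ≤ 0 := by
  rw [mul_assoc]
  exact mul_nonpos_of_nonneg_of_nonpos hV.le
    (cos_mul_neg_mul_cos_sub_sin_div_add_one_div_nonpos (hra.trans_le hr) hkr hθ)

theorem stmt_5 (V k r_a r θ : ℝ) (hV : 0 < V) (hk : 0 < k)
    (hra : 0 < r_a) (hr : r_a ≤ r)
    (hcond : 1 / r ≤ k * Real.sqrt (1 - r_a ^ 2 / r ^ 2))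
    (hθ : θ ∈ Set.Icc 0 Real.pi) (hkr : 1 / r ≤ k) :
    V * Real.cos θ * (-k * Real.cos θ - Real.sin θ / r + 1 / r) ≤ 0 :=
  stmt_5_general V k r_a r θ hV hra hr hθ hkr
end

section
/- Let V > 0, k > 1/r_d, r_d > 0, r_a = sqrt(r_d^2 - 1/k^2). The 2×2 matrix A with entries A11 = 0, A12 = V, A21 = -k*V*r_a^2/(r_d^3*sqrt(1 - r_a^2/r_d^2)) - V/r_d^2, A22 = -k*V is Hurwitz, i.e., all eigenvalues of A have negative real part. -/
/-!
A real 2×2 matrix has characteristic polynomial `X² - (tr A) X + det A`, so when `tr A < 0` and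
`det A > 0` both coefficients of `X² + a X + b` are positive. A non-real root of such a quadratic
has real part `-a/2`, and a real root cannot be nonnegative; hence `A` is Hurwitz. For the
linearization, `tr A = -kV < 0` and `det A = -V A₂₁ > 0` because every term of `A₂₁` is `≤ 0`
and `-V / r_d²` is strictly negative.
-/

open Complex

theorem Complex.re_neg_of_sq_add_mul_add_eq_zero {a b : ℝ} (ha : 0 < a) (hb : 0 < b) {z : ℂ}
    (hz : z ^ 2 + a * z + b = 0) : z.re < 0 := by
  have hre : z.re ^ 2 - z.im ^ 2 + a * z.re + b = 0 := by
    simpa [sq] using congrArg re hz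
  have him : z.im * (2 * z.re + a) = 0 := by
    have := congrArg im hz
    simp only [sq, add_im, mul_im, ofReal_re, ofReal_im, zero_mul, add_zero, zero_im] at this
    linarith
  rcases mul_eq_zero.mp him with h_real | h_re
  · by_contra! h_nonneg
    nlinarith
  · linarith

theorem Matrix.sq_sub_trace_mul_add_det_eq_zero_of_mem_spectrum {K : Type*} [Field K]
    {A : Matrix (Fin 2) (Fin 2) K} {μ : K} (hμ : μ ∈ spectrum K A) :
    μ ^ 2 - A.trace * μ + A.det = 0 := by
  simpa [Matrix.charpoly_fin_two] using (Matrix.mem_spectrum_iff_isRoot_charpoly.mp hμ).eq_zero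

theorem Matrix.re_neg_of_mem_spectrum_map_ofReal {A : Matrix (Fin 2) (Fin 2) ℝ}
    (htr : A.trace < 0) (hdet : 0 < A.det) {μ : ℂ} (hμ : μ ∈ spectrum ℂ (A.map ofReal)) :
    μ.re < 0 := by
  have hchar := Matrix.sq_sub_trace_mul_add_det_eq_zero_of_mem_spectrum hμ
  have htr_map : (A.map ofReal).trace = A.trace := (AddMonoidHom.map_trace ofRealHom A).symm
  have hdet_map : (A.map ofReal).det = A.det := (ofRealHom.map_det A).symm
  rw [htr_map, hdet_map] at hchar
  refine Complex.re_neg_of_sq_add_mul_add_eq_zero (neg_pos.mpr htr) hdet ?_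
  simpa [sub_eq_add_neg] using hchar

theorem stmt_7_general (V k r_d : ℝ) (hV : 0 < V) (hrd : 0 < r_d) (hk : 1 / r_d < k)
    (r_a : ℝ) :
    ∀ μ ∈ spectrum ℂ
      ((Matrix.of ![![(0 : ℝ), V],
          ![-k * V * r_a ^ 2 / (r_d ^ 3 * Real.sqrt (1 - r_a ^ 2 / r_d ^ 2)) - V / r_d ^ 2,
            -k * V]]).map (Complex.ofReal)),
      μ.re < 0 := by
  have hk0 : 0 < k := (one_div_pos.mpr hrd).trans hk
  have hcurv : 0 ≤ k * V * r_a ^ 2 / (r_d ^ 3 * Real.sqrt (1 - r_a ^ 2 / r_d ^ 2)) := by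
    positivity
  have hV_rd : 0 < V / r_d ^ 2 := by positivity
  intro μ hμ
  refine Matrix.re_neg_of_mem_spectrum_map_ofReal ?_ ?_ hμ
  · simp only [Matrix.trace_fin_two_of]
    nlinarith
  · simp only [Matrix.det_fin_two_of, neg_mul, neg_div]
    nlinarith

theorem stmt_7 (V k r_d : ℝ) (hV : 0 < V) (hrd : 0 < r_d) (hk : 1 / r_d < k)
    (r_a : ℝ) (hra : r_a = Real.sqrt (r_d ^ 2 - 1 / k ^ 2)) :
    ∀ μ ∈ spectrum ℂ
      ((Matrix.of ![![(0 : ℝ), V],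
          ![-k * V * r_a ^ 2 / (r_d ^ 3 * Real.sqrt (1 - r_a ^ 2 / r_d ^ 2)) - V / r_d ^ 2,
            -k * V]]).map (Complex.ofReal)),
      μ.re < 0 :=
  stmt_7_general V k r_d hV hrd hk r_a
end
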